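/- arXiv:1105.6075 — 2 statements merged into one kernel-verified Lean document; each statement's English description precedes it below -/
import Mathlib

section
/- Let G be an acyclic directed mixed graph on a finite vertex set V with finite state spaces X_v of size at least 2, let Ḡ be a head-preserving completion of G, and let H be a head of G with tail T = tail_G(H) in G and tail T̄ = tail_{Ḡ}(H) in Ḡ. Then every strictly positive probability distribution p on X_V satisfying the global Markov property for G satisfies X_H ⊥ X_{T̄∖T} | X_T [p]. -/
open Finset

open scoped Classical

variable {V : Type} [Fintype V] [DecidableEq V]

/-- Joint state space: variable `v` takes values in `{0, …, d v + 1}`,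
so each state space has size `d v + 2 ≥ 2`. -/
abbrev Config (V : Type) (d : V → ℕ) : Type := ∀ v : V, Fin (d v + 2)

/-- Marginal `p_M` of `p` on the margin `M`, as a function of a full configuration
(it depends only on the coordinates in `M`). -/
noncomputable def margin (d : V → ℕ) (p : Config V d → ℝ) (M : Finset V)
    (x : Config V d) : ℝ :=
  ∑ y : Config V d, if ∀ v ∈ M, y v = x v then p y else 0

/-- Marginal log-linear parameter `λ_L^M(x_L)`:
`|X_M|⁻¹ ∑_{y_M ∈ X_M} log p_M(y_M) ∏_{v ∈ L} (|X_v|·1[x_v = y_v] − 1)`.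
The sum over `y_M ∈ X_M` is realized by summing over full configurations `y`
that are `0` outside `M` (one representative for each `y_M`). -/
noncomputable def mll (d : V → ℕ) (p : Config V d → ℝ) (L M : Finset V)
    (x : Config V d) : ℝ :=
  (∏ v ∈ M, ((d v + 2 : ℕ) : ℝ))⁻¹ *
    ∑ y : Config V d,
      if ∀ v ∉ M, y v = 0 then
        Real.log (margin d p M y) *
          ∏ v ∈ L, (((d v + 2 : ℕ) : ℝ) * (if x v = y v then 1 else 0) - 1)
      else 0

/-- Conditional independence `X_A ⊥ X_B | X_C [p]`:
`p_{A∪B∪C}(x) · p_C(x) = p_{A∪C}(x) · p_{B∪C}(x)` for all configurations. -/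
def CondIndep (d : V → ℕ) (p : Config V d → ℝ) (A B C : Finset V) : Prop :=
  ∀ x : Config V d,
    margin d p (A ∪ B ∪ C) x * margin d p C x
      = margin d p (A ∪ C) x * margin d p (B ∪ C) x

/-- An acyclic directed mixed graph (ADMG): directed edges `dir` and a symmetric
irreflexive set of bidirected edges `bi`, with no directed cycle. -/
structure ADMG (V : Type) [Fintype V] [DecidableEq V] where
  dir : V → V → Prop
  bi : V → V → Prop
  bi_symm : ∀ {v w}, bi v w → bi w v
  bi_irrefl : ∀ v, ¬ bi v v
  acyclic : ∀ v, ¬ Relation.TransGen dir v v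

namespace ADMG

/-- Ancestors of (members of) `A`: vertices `w` with `w = a` or a directed path `w → ⋯ → a`
for some `a ∈ A`. -/
noncomputable def anc (G : ADMG V) (A : Finset V) : Finset V :=
  univ.filter fun w => ∃ a ∈ A, Relation.ReflTransGen G.dir w a

/-- Descendants of (members of) `A`. -/
noncomputable def dec (G : ADMG V) (A : Finset V) : Finset V :=
  univ.filter fun w => ∃ a ∈ A, Relation.ReflTransGen G.dir a w

/-- Parents of (members of) `A`. -/
noncomputable def pa (G : ADMG V) (A : Finset V) : Finset V :=
  univ.filter fun w => ∃ a ∈ A, G.dir w a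

/-- `barren_G(U)`: members of `U` with no non-trivial descendant in `U`. -/
noncomputable def barren (G : ADMG V) (U : Finset V) : Finset V :=
  U.filter fun v => G.dec {v} ∩ U = {v}

/-- `U` is barren if `barren_G(U) = U`. -/
def IsBarren (G : ADMG V) (U : Finset V) : Prop := G.barren U = U

/-- One bidirected step inside the induced subgraph `G_S`. -/
def biStep (G : ADMG V) (S : Finset V) (u w : V) : Prop :=
  u ∈ S ∧ w ∈ S ∧ G.bi u w

/-- District of (members of) `A` in the induced subgraph `G_S`: vertices joined to a member
of `A` by a (possibly empty) bidirected path within `S`. -/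
noncomputable def disIn (G : ADMG V) (S A : Finset V) : Finset V :=
  univ.filter fun w => ∃ a ∈ A, a ∈ S ∧ w ∈ S ∧ Relation.ReflTransGen (G.biStep S) a w

/-- District in the whole graph. -/
noncomputable def dis (G : ADMG V) (A : Finset V) : Finset V := G.disIn univ A

/-- A head: a nonempty barren set connected by bidirected paths in `G_{an_G(H)}`. -/
def IsHead (G : ADMG V) (H : Finset V) : Prop :=
  H.Nonempty ∧ G.IsBarren H ∧
    ∀ a ∈ H, ∀ b ∈ H, Relation.ReflTransGen (G.biStep (G.anc H)) a b

/-- The tail of a head: `tail_G(H) = pa_G(D) ∪ (D ∖ H)` where `D = dis_{G_{an(H)}}(H)`. -/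
noncomputable def tail (G : ADMG V) (H : Finset V) : Finset V :=
  G.pa (G.disIn (G.anc H) H) ∪ (G.disIn (G.anc H) H \ H)

end ADMG

/-- `Gbar` is a head-preserving completion of `G`: a complete supergraph (on the same
vertices) in which every head of `G` is still a head. -/
def IsHPC (G Gbar : ADMG V) : Prop :=
  (∀ v w, G.dir v w → Gbar.dir v w) ∧
  (∀ v w, G.bi v w → Gbar.bi v w) ∧
  (∀ v w : V, v ≠ w → Gbar.dir v w ∨ Gbar.dir w v ∨ Gbar.bi v w) ∧
  (∀ H : Finset V, G.IsHead H → Gbar.IsHead H)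

/-- Type of an edge on a path, read from left to right:
`u → w`, `u ← w`, or `u ↔ w`. -/
inductive EdgeType : Type
  | toRight
  | toLeft
  | biE

/-- The edge of the given type is present in `G` between `u` (left) and `w` (right). -/
def edgeOK (G : ADMG V) : EdgeType → V → V → Prop
  | .toRight, u, w => G.dir u w
  | .toLeft,  u, w => G.dir w u
  | .biE,     u, w => G.bi u w

/-- The edge has an arrowhead at its right endpoint. -/
def arrowAtRight : EdgeType → Prop
  | .toRight => True
  | .toLeft  => False
  | .biE     => True

/-- The edge has an arrowhead at its left endpoint. -/
def arrowAtLeft : EdgeType → Prop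
  | .toRight => False
  | .toLeft  => True
  | .biE     => True

/-- A path from `x` to `y` in the mixed graph `G`: distinct vertices `f 0, …, f n`
joined by edges of the recorded types. -/
structure GPath (G : ADMG V) (x y : V) where
  n : ℕ
  f : Fin (n + 1) → V
  inj : Function.Injective f
  first : f 0 = x
  last : f (Fin.last n) = y
  e : Fin n → EdgeType
  ok : ∀ i : Fin n, edgeOK G (e i) (f i.castSucc) (f i.succ)

/-- The interior vertex `f (i+1)` is a collider on the path: both incident edges
have an arrowhead at it. -/
def GPath.colliderAt {G : ADMG V} {x y : V} (w : GPath G x y)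
    (i : ℕ) (h : i + 1 < w.n) : Prop :=
  arrowAtRight (w.e ⟨i, by omega⟩) ∧ arrowAtLeft (w.e ⟨i + 1, h⟩)

/-- The path is blocked by `C`: some interior non-collider is in `C`, or some interior
collider is outside `an_G(C)`. -/
def GPath.Blocked {G : ADMG V} {x y : V} (w : GPath G x y) (C : Finset V) : Prop :=
  ∃ (i : ℕ) (h : i + 1 < w.n),
    (¬ w.colliderAt i h ∧ w.f ⟨i + 1, by omega⟩ ∈ C) ∨
    (w.colliderAt i h ∧ w.f ⟨i + 1, by omega⟩ ∉ G.anc C)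

/-- m-separation of `A` and `B` given `C` in `G`. -/
def MSep (G : ADMG V) (A B C : Finset V) : Prop :=
  ∀ a ∈ A, ∀ b ∈ B, ∀ w : GPath G a b, w.Blocked C

/-- The global Markov property: m-separation implies conditional independence. -/
def GlobalMarkov (G : ADMG V) (d : V → ℕ) (p : Config V d → ℝ) : Prop :=
  ∀ A B C : Finset V, Disjoint A B → Disjoint A C → Disjoint B C →
    MSep G A B C → CondIndep d p A B C

/-! By the global Markov property it suffices that every path in `G` from `H` to a vertex
`b ∈ T̄ ∖ T` is blocked by `T`. An unblocked path starting in `H` can only travel inside the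
district `D` of `H` in `G_{an(H)}`, or step out of `D` through a parent of `D` (which lies in
`T` and is a non-collider), or start a directed path leaving `an_G(H)` either from `H` or from a
bidirected neighbour `x` of `D`. None of these can end at `b`: in the last case `b`, being in
`an_Ḡ(H)`, would make `x` an ancestor of `H` in `Ḡ`, whereas `H ∪ {x}` is a head of `G`, hence
of `Ḡ`, hence barren in `Ḡ`. -/

namespace ADMG

variable {G : ADMG V} {A B S U H : Finset V} {u w x : V}

@[simp] lemma mem_anc : w ∈ G.anc A ↔ ∃ a ∈ A, Relation.ReflTransGen G.dir w a := by
  simp [anc]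

@[simp] lemma mem_dec : w ∈ G.dec A ↔ ∃ a ∈ A, Relation.ReflTransGen G.dir a w := by
  simp [dec]

@[simp] lemma mem_pa : w ∈ G.pa A ↔ ∃ a ∈ A, G.dir w a := by
  simp [pa]

@[simp] lemma mem_disIn :
    w ∈ G.disIn S A ↔ ∃ a ∈ A, a ∈ S ∧ w ∈ S ∧ Relation.ReflTransGen (G.biStep S) a w := by
  simp [disIn]

instance : Std.Symm (G.biStep S) := ⟨fun _ _ h => ⟨h.2.1, h.1, G.bi_symm h.2.2⟩⟩

lemma subset_anc (A : Finset V) : A ⊆ G.anc A := fun a ha => mem_anc.2 ⟨a, ha, .refl⟩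

lemma anc_mono (h : A ⊆ B) : G.anc A ⊆ G.anc B := fun w hw => by
  obtain ⟨a, ha, hwa⟩ := mem_anc.1 hw
  exact mem_anc.2 ⟨a, h ha, hwa⟩

lemma mem_anc_of_dir (huw : G.dir u w) (hw : w ∈ G.anc A) : u ∈ G.anc A := by
  obtain ⟨a, ha, hwa⟩ := mem_anc.1 hw
  exact mem_anc.2 ⟨a, ha, .head huw hwa⟩

lemma anc_subset_of_subset_anc (h : B ⊆ G.anc A) : G.anc B ⊆ G.anc A := fun w hw => by
  obtain ⟨b, hb, hwb⟩ := mem_anc.1 hw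
  obtain ⟨a, ha, hba⟩ := mem_anc.1 (h hb)
  exact mem_anc.2 ⟨a, ha, hwb.trans hba⟩

lemma pa_subset_of_subset_anc (h : B ⊆ G.anc A) : G.pa B ⊆ G.anc A := fun w hw => by
  obtain ⟨b, hb, hwb⟩ := mem_pa.1 hw
  exact mem_anc_of_dir hwb (h hb)

lemma disIn_subset : G.disIn S A ⊆ S := fun w hw => by
  obtain ⟨_, _, _, hwS, _⟩ := mem_disIn.1 hw
  exact hwS

lemma subset_disIn (h : A ⊆ S) : A ⊆ G.disIn S A := fun a ha =>
  mem_disIn.2 ⟨a, ha, h ha, h ha, .refl⟩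

lemma mem_disIn_of_bi (hu : u ∈ G.disIn S A) (huw : G.bi u w) (hw : w ∈ S) :
    w ∈ G.disIn S A := by
  obtain ⟨a, ha, haS, huS, hau⟩ := mem_disIn.1 hu
  exact mem_disIn.2 ⟨a, ha, haS, hw, hau.tail ⟨huS, hw, huw⟩⟩

lemma tail_subset_anc (H : Finset V) : G.tail H ⊆ G.anc H :=
  union_subset (pa_subset_of_subset_anc disIn_subset) (sdiff_subset.trans disIn_subset)

lemma isBarren_iff :
    G.IsBarren U ↔ ∀ u ∈ U, ∀ w ∈ U, Relation.ReflTransGen G.dir u w → w = u := by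
  rw [IsBarren, barren, filter_eq_self]
  refine forall₂_congr fun u hu => ⟨fun h w hw huw => ?_, fun h => ?_⟩
  · have hmem : w ∈ G.dec {u} ∩ U := mem_inter.2 ⟨mem_dec.2 ⟨u, mem_singleton_self u, huw⟩, hw⟩
    simpa [h] using hmem
  · ext w
    simp only [mem_inter, mem_dec, mem_singleton, exists_eq_left]
    exact ⟨fun ⟨huw, hw⟩ => h w hw huw, by rintro rfl; exact ⟨.refl, hu⟩⟩

lemma IsBarren.eq_of_reflTransGen (hU : G.IsBarren U) (hu : u ∈ U) (hw : w ∈ U)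
    (huw : Relation.ReflTransGen G.dir u w) : w = u :=
  isBarren_iff.1 hU u hu w hw huw

lemma IsBarren.not_mem_anc_of_transGen (hU : G.IsBarren U) (hu : u ∈ U)
    (huw : Relation.TransGen G.dir u w) : w ∉ G.anc U := by
  intro hw
  obtain ⟨u', hu', hwu'⟩ := mem_anc.1 hw
  have hcycle := huw.trans_left hwu'
  exact G.acyclic u (hU.eq_of_reflTransGen hu hu' hcycle.to_reflTransGen ▸ hcycle)

lemma IsBarren.disjoint_tail (hH : G.IsBarren H) : Disjoint H (G.tail H) := by
  refine disjoint_left.2 fun h hh ht => ?_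
  rcases mem_union.1 ht with hpa | hD
  · obtain ⟨w, hw, hhw⟩ := mem_pa.1 hpa
    exact hH.not_mem_anc_of_transGen hh (.single hhw) (disIn_subset hw)
  · exact (mem_sdiff.1 hD).2 hh

lemma IsHead.insert_of_bi (hH : G.IsHead H) (hxa : x ∉ G.anc H)
    (hxd : ∀ h ∈ H, ¬ Relation.ReflTransGen G.dir h x) (hu : u ∈ G.disIn (G.anc H) H)
    (hux : G.bi u x) : G.IsHead (insert x H) := by
  have hanc : G.anc H ⊆ G.anc (insert x H) := anc_mono (subset_insert x H)
  have hlift : ∀ {y z}, Relation.ReflTransGen (G.biStep (G.anc H)) y z →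
      Relation.ReflTransGen (G.biStep (G.anc (insert x H))) y z :=
    fun h => Relation.ReflTransGen.mono (fun _ _ h => ⟨hanc h.1, hanc h.2.1, h.2.2⟩) _ _ h
  have hxH : ∀ h ∈ H, Relation.ReflTransGen (G.biStep (G.anc (insert x H))) x h := by
    intro h hh
    obtain ⟨a, ha, -, huS, hau⟩ := mem_disIn.1 hu
    exact .head ⟨subset_anc _ (mem_insert_self x H), hanc huS, G.bi_symm hux⟩
      (hlift ((Std.Symm.symm _ _ hau).trans (hH.2.2 a ha h hh)))
  refine ⟨insert_nonempty x H, isBarren_iff.2 ?_, ?_⟩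
  · simp only [mem_insert]
    rintro y (rfl | hy) z (rfl | hz) hyz
    · rfl
    · exact absurd (mem_anc.2 ⟨z, hz, hyz⟩) hxa
    · exact absurd hyz (hxd y hy)
    · exact hH.2.1.eq_of_reflTransGen hy hz hyz
  · simp only [mem_insert]
    rintro y (rfl | hy) z (rfl | hz)
    · exact .refl
    · exact hxH z hz
    · exact Std.Symm.symm _ _ (hxH y hy)
    · exact hlift (hH.2.2 y hy z hz)

end ADMG

open ADMG

namespace GPath

variable {G : ADMG V} {a b : V} {C : Finset V} (w : GPath G a b)

lemma blocked_of_nonCollider {j i : Fin w.n} (hji : j.val + 1 = i.val)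
    (hnc : ¬ (arrowAtRight (w.e j) ∧ arrowAtLeft (w.e i))) (hC : w.f i.castSucc ∈ C) :
    w.Blocked C := by
  obtain ⟨j, hj⟩ := j
  obtain ⟨i, hi⟩ := i
  subst hji
  exact ⟨j, hi, Or.inl ⟨hnc, hC⟩⟩

lemma blocked_of_collider {j i : Fin w.n} (hji : j.val + 1 = i.val)
    (hc : arrowAtRight (w.e j) ∧ arrowAtLeft (w.e i)) (hC : w.f i.castSucc ∉ G.anc C) :
    w.Blocked C := by
  obtain ⟨j, hj⟩ := j
  obtain ⟨i, hi⟩ := i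
  subst hji
  exact ⟨j, hi, Or.inr ⟨hc, hC⟩⟩

/-- A state `S u arr` records the current vertex `u` and whether the edge by which the path
entered `u` has an arrowhead at `u`; a vertex `u ≠ a` that is left by an edge is interior. -/
theorem exists_state_of_not_blocked (hw : ¬ w.Blocked C) (S : V → Prop → Prop)
    (hstart : S a False)
    (hstep : ∀ u u' e arr, S u arr → edgeOK G e u u' →
      (u ≠ a → (arr ∧ arrowAtLeft e → u ∈ G.anc C) ∧ (¬ (arr ∧ arrowAtLeft e) → u ∉ C)) →
      S u' (arrowAtRight e)) :
    ∃ arr, S b arr := by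
  let arrives (i : Fin (w.n + 1)) : Prop := ∃ j : Fin w.n, j.val + 1 = i.val ∧ arrowAtRight (w.e j)
  have hinv : ∀ i, S (w.f i) (arrives i) := by
    intro i
    induction i using Fin.induction with
    | zero =>
      have h0 : arrives 0 = False := propext ⟨fun ⟨j, hj, _⟩ => by simp at hj, False.elim⟩
      rw [h0, w.first]
      exact hstart
    | succ i ih =>
      have hsucc : arrives i.succ = arrowAtRight (w.e i) := by
        refine propext ⟨fun ⟨j, hj, hr⟩ => ?_, fun hr => ⟨i, rfl, hr⟩⟩
        rwa [Fin.ext (by simpa using hj : j.val = i.val)] at hr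
      rw [hsucc]
      refine hstep _ _ _ _ ih (w.ok i) fun hne => ⟨fun ⟨⟨j, hj, hr⟩, hl⟩ => ?_, fun hnc hC => ?_⟩
      · by_contra hC
        exact hw (w.blocked_of_collider (by simpa using hj) ⟨hr, hl⟩ hC)
      · have hi : i.val ≠ 0 := fun h => hne (by
          rw [show i.castSucc = 0 from Fin.ext (by simpa using h)]; exact w.first)
        let j : Fin w.n := ⟨i.val - 1, by omega⟩
        exact hw (w.blocked_of_nonCollider (j := j) (by simp only [j]; omega)
          (fun hc => hnc ⟨⟨j, by simp only [j, Fin.val_castSucc]; omega, hc.1⟩, hc.2⟩) hC)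
  exact ⟨_, w.last ▸ hinv (Fin.last w.n)⟩

end GPath

namespace ADMG

/-- The invariant kept by a path from `H` that is not blocked by `tail_G(H)`, at a vertex `u`
entered with (`arr`) or without an arrowhead at `u`. -/
def HeadWalkState (G : ADMG V) (H : Finset V) (u : V) (arr : Prop) : Prop :=
  (u ∈ G.disIn (G.anc H) H ∧ (u ∈ H ∨ arr)) ∨
  (¬ arr ∧ u ∈ G.tail H) ∨
  (arr ∧ u ∉ G.anc H ∧ ∃ x, Relation.ReflTransGen G.dir x u ∧
    (x ∈ H ∨ x ∉ G.anc H ∧ ∃ y ∈ G.disIn (G.anc H) H, G.bi y x))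

variable {G : ADMG V} {H : Finset V} {u u' : V} {e : EdgeType} {arr : Prop}

lemma headWalkState_step (hH : G.IsBarren H) (hS : G.HeadWalkState H u arr)
    (he : edgeOK G e u u')
    (hloc : u ∉ H → (arr ∧ arrowAtLeft e → u ∈ G.anc (G.tail H)) ∧
      (¬ (arr ∧ arrowAtLeft e) → u ∉ G.tail H)) :
    G.HeadWalkState H u' (arrowAtRight e) := by
  rcases hS with ⟨hD, hu⟩ | ⟨harr, hT⟩ | ⟨harr, hua, x, hxu, hx⟩
  · cases e with
    | toRight =>
      by_cases huH : u ∈ H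
      · exact Or.inr (Or.inr ⟨trivial, hH.not_mem_anc_of_transGen huH (.single he),
          u, .single he, Or.inl huH⟩)
      · exact absurd (mem_union_right _ (mem_sdiff.2 ⟨hD, huH⟩)) ((hloc huH).2 fun h => h.2)
    | toLeft => exact Or.inr (Or.inl ⟨id, mem_union_left _ (mem_pa.2 ⟨u, hD, he⟩)⟩)
    | biE =>
      by_cases hu' : u' ∈ G.anc H
      · exact Or.inl ⟨mem_disIn_of_bi hD he hu', Or.inr trivial⟩
      · exact Or.inr (Or.inr ⟨trivial, hu', u', .refl, Or.inr ⟨hu', u, hD, he⟩⟩)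
  · have huH : u ∉ H := fun hu => disjoint_left.1 hH.disjoint_tail hu hT
    exact absurd hT ((hloc huH).2 fun h => harr h.1)
  · have huH : u ∉ H := fun hu => hua (subset_anc H hu)
    cases e with
    | toRight =>
      exact Or.inr (Or.inr ⟨trivial, fun hu' => hua (mem_anc_of_dir he hu'), x, hxu.tail he, hx⟩)
    | toLeft | biE =>
      exact absurd (anc_subset_of_subset_anc (tail_subset_anc H) ((hloc huH).1 ⟨harr, trivial⟩))
        hua

end ADMG

section Completion

variable {G Gbar : ADMG V} {H : Finset V} {u x b : V} {arr : Prop}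

lemma IsHPC.reflTransGen_dir (hG : IsHPC G Gbar) {v w : V}
    (h : Relation.ReflTransGen G.dir v w) : Relation.ReflTransGen Gbar.dir v w :=
  Relation.ReflTransGen.mono hG.1 _ _ h

lemma IsHPC.not_mem_anc_of_bi (hG : IsHPC G Gbar) (hH : G.IsHead H) (hxa : x ∉ G.anc H)
    (hxd : ∀ h ∈ H, ¬ Relation.ReflTransGen G.dir h x) (hu : u ∈ G.disIn (G.anc H) H)
    (hux : G.bi u x) : x ∉ Gbar.anc H := by
  intro hx
  obtain ⟨h, hh, hxh⟩ := mem_anc.1 hx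
  have hhx : h = x := (hG.2.2.2 _ (hH.insert_of_bi hxa hxd hu hux)).2.1.eq_of_reflTransGen
    (mem_insert_self x H) (mem_insert_of_mem hh) hxh
  exact hxa (hhx ▸ subset_anc H hh)

lemma IsHPC.not_headWalkState (hG : IsHPC G Gbar) (hH : G.IsHead H)
    (hb : b ∈ Gbar.tail H \ G.tail H) : ¬ G.HeadWalkState H b arr := by
  obtain ⟨hbTbar, hbT⟩ := mem_sdiff.1 hb
  have hHbar := (hG.2.2.2 H hH).2.1
  have hbH : b ∉ H := fun h => disjoint_left.1 hHbar.disjoint_tail h hbTbar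
  have hbanc : b ∈ Gbar.anc H := tail_subset_anc H hbTbar
  have hbdec : ∀ h ∈ H, ¬ Relation.ReflTransGen G.dir h b := fun h hh hhb =>
    hHbar.not_mem_anc_of_transGen hh
      ((Relation.reflTransGen_iff_eq_or_transGen.1 (hG.reflTransGen_dir hhb)).resolve_left
        fun hbh => hbH (hbh ▸ hh)) hbanc
  rintro (⟨hD, -⟩ | ⟨-, hT⟩ | ⟨-, -, x, hxb, hx | ⟨hxa, y, hy, hyx⟩⟩)
  · exact hbT (mem_union_right _ (mem_sdiff.2 ⟨hD, hbH⟩))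
  · exact hbT hT
  · exact hbdec x hx hxb
  · have hxd : ∀ h ∈ H, ¬ Relation.ReflTransGen G.dir h x := fun h hh hhx =>
      hbdec h hh (hhx.trans hxb)
    obtain ⟨h, hh, hbh⟩ := mem_anc.1 hbanc
    exact hG.not_mem_anc_of_bi hH hxa hxd hy hyx
      (mem_anc.2 ⟨h, hh, (hG.reflTransGen_dir hxb).trans hbh⟩)

lemma IsHPC.blocked_of_mem_tail_sdiff (hG : IsHPC G Gbar) (hH : G.IsHead H) {a : V}
    (ha : a ∈ H) (hb : b ∈ Gbar.tail H \ G.tail H) (w : GPath G a b) :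
    w.Blocked (G.tail H) := by
  by_contra hw
  obtain ⟨arr, hS⟩ := w.exists_state_of_not_blocked hw (G.HeadWalkState H)
    (Or.inl ⟨subset_disIn (subset_anc H) ha, Or.inl ha⟩)
    fun _ _ _ _ hS he hloc => headWalkState_step hH.2.1 hS he fun hu => hloc fun h => hu (h ▸ ha)
  exact hG.not_headWalkState hH hb hS

end Completion

theorem head_indep_extra_tail_general (G Gbar : ADMG V) (hhpc : IsHPC G Gbar)
    (H : Finset V) (hH : G.IsHead H)
    (d : V → ℕ) (p : Config V d → ℝ)
    (hGM : GlobalMarkov G d p) :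
    CondIndep d p H (Gbar.tail H \ G.tail H) (G.tail H) := by
  have hdisj : Disjoint H (Gbar.tail H \ G.tail H) :=
    disjoint_of_subset_right sdiff_subset (hhpc.2.2.2 H hH).2.1.disjoint_tail
  exact hGM _ _ _ hdisj hH.2.1.disjoint_tail sdiff_disjoint
    fun _ ha _ hb w => hhpc.blocked_of_mem_tail_sdiff hH ha hb w

/-- for a head-preserving completion `Ḡ` of `G` and a head `H` of `G` with
tails `T` in `G` and `T̄` in `Ḡ`, every strictly positive distribution satisfying the
global Markov property for `G` satisfies `X_H ⊥ X_{T̄ ∖ T} | X_T`. -/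
theorem head_indep_extra_tail (G Gbar : ADMG V) (hhpc : IsHPC G Gbar)
    (H : Finset V) (hH : G.IsHead H)
    (d : V → ℕ) (p : Config V d → ℝ)
    (hpos : ∀ x, 0 < p x) (hsum : ∑ x, p x = 1) (hGM : GlobalMarkov G d p) :
    CondIndep d p H (Gbar.tail H \ G.tail H) (G.tail H) :=
  head_indep_extra_tail_general G Gbar hhpc H hH d p hGM
end

section
/- Let G be an acyclic directed mixed graph on a finite vertex set V, and let Ḡ be obtained from G by adding a bidirected edge v↔w for every pair of distinct vertices v, w that are joined by no edge in G. Then Ḡ is an ADMG, every pair of distinct vertices of Ḡ is joined by at least one edge, and every head of G is a head of Ḡ; that is, Ḡ is a head-preserving completion of G. In particular, every ADMG admits a head-preserving completion. -/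
open Finset

open scoped Classical

variable {V : Type} [Fintype V] [DecidableEq V]

/-! Adding bidirected edges leaves the directed part, hence acyclicity, ancestors and
barrenness, untouched, and can only create bidirected paths; so every head stays barren and
bidirected-connected inside its (unchanged) ancestral set. -/

namespace ADMG

def Adj (G : ADMG V) (v w : V) : Prop :=
  G.dir v w ∨ G.dir w v ∨ G.bi v w

theorem adj_comm (G : ADMG V) (v w : V) : G.Adj v w ↔ G.Adj w v := by
  constructor <;> rintro (h | h | h)
  exacts [Or.inr (Or.inl h), Or.inl h, Or.inr (Or.inr (G.bi_symm h)),
    Or.inr (Or.inl h), Or.inl h, Or.inr (Or.inr (G.bi_symm h))]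

def bidirectedCompletion (G : ADMG V) : ADMG V where
  dir := G.dir
  bi v w := G.bi v w ∨ (v ≠ w ∧ ¬ G.Adj v w)
  bi_symm := by
    rintro v w (h | ⟨hne, hnadj⟩)
    · exact Or.inl (G.bi_symm h)
    · exact Or.inr ⟨hne.symm, (G.adj_comm w v).not.mpr hnadj⟩
  bi_irrefl v := by
    rintro (h | ⟨hne, -⟩)
    exacts [G.bi_irrefl v h, hne rfl]
  acyclic := G.acyclic

theorem bidirectedCompletion_adj (G : ADMG V) {v w : V} (hne : v ≠ w) :
    G.bidirectedCompletion.Adj v w := by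
  by_cases h : G.Adj v w
  · exact h.imp_right (Or.imp_right Or.inl)
  · exact Or.inr (Or.inr (Or.inr ⟨hne, h⟩))

section SameDirectedPart

variable {G G' : ADMG V}

theorem anc_eq_of_dir_eq (hdir : G.dir = G'.dir) (A : Finset V) : G.anc A = G'.anc A := by
  simp only [anc, hdir]

theorem isBarren_iff_of_dir_eq (hdir : G.dir = G'.dir) (U : Finset V) :
    G.IsBarren U ↔ G'.IsBarren U := by
  obtain ⟨dir, _⟩ := G
  obtain ⟨dir', _⟩ := G'
  subst hdir
  rfl

theorem IsHead.of_dir_eq_of_bi_le {H : Finset V} (hH : G.IsHead H) (hdir : G.dir = G'.dir)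
    (hbi : ∀ v w, G.bi v w → G'.bi v w) : G'.IsHead H := by
  obtain ⟨hne, hbarren, hconn⟩ := hH
  refine ⟨hne, (isBarren_iff_of_dir_eq hdir H).mp hbarren, fun a ha b hb => ?_⟩
  rw [← anc_eq_of_dir_eq hdir]
  exact Relation.ReflTransGen.mono (fun u w ⟨hu, hw, huw⟩ => ⟨hu, hw, hbi u w huw⟩) a b
    (hconn a ha b hb)

end SameDirectedPart

end ADMG

/-- adding a bidirected edge between every pair of distinct non-adjacent
vertices of `G` yields an ADMG which is a head-preserving completion of `G`; in
particular every ADMG admits a head-preserving completion. -/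
theorem exists_bidirected_completion (G : ADMG V) :
    ∃ Gbar : ADMG V,
      Gbar.dir = G.dir ∧
      (∀ v w : V, Gbar.bi v w ↔
        G.bi v w ∨ (v ≠ w ∧ ¬ (G.dir v w ∨ G.dir w v ∨ G.bi v w))) ∧
      IsHPC G Gbar := by
  refine ⟨G.bidirectedCompletion, rfl, fun _ _ => Iff.rfl, ?_⟩
  exact ⟨fun _ _ => id, fun _ _ => Or.inl, fun _ _ => G.bidirectedCompletion_adj,
    fun _ hH => hH.of_dir_eq_of_bi_le rfl fun _ _ => Or.inl⟩
end
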